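/- arXiv:1911.10302 — 2 statements merged into one kernel-verified Lean document; each statement's English description precedes it below -/
import Mathlib

section
/- Let K be a Killing field on ℝ³ and let (u,p) be a smooth solution of the incompressible Euler equations on I × ℝ³. Then the swirl σ(t,x) = ⟨u(t,x), K(x)⟩ satisfies the equation ∂ₜσ + ⟨u, ∇ₓσ⟩ = −⟨∇ₓp, K⟩ on I × ℝ³. -/
/-! Along the flow, the material derivative of `σ = ⟨u, K⟩` is `⟨∂ₜu + (Dₓu)u, K⟩ + ⟨u, DK u⟩`.
The second term vanishes because `DK` is antisymmetric, and Euler's equation turns the first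
into `−⟨∇ₓp, K⟩`. -/

noncomputable section

/-- Vectors in ℝ³. -/
abbrev V3 : Type := Fin 3 → ℝ

/-- Euclidean inner product on ℝ³. -/
def dot3 (u v : V3) : ℝ := ∑ i, u i * v i

/-- Cross product on ℝ³. -/
def cross3 (u v : V3) : V3 :=
  ![u 1 * v 2 - u 2 * v 1, u 2 * v 0 - u 0 * v 2, u 0 * v 1 - u 1 * v 0]

/-- Partial derivative ∂ᵢ of a scalar function. -/
def pd (i : Fin 3) (f : V3 → ℝ) (x : V3) : ℝ := fderiv ℝ f x (Pi.single i 1)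

/-- Gradient of a scalar function. -/
def grad3 (f : V3 → ℝ) (x : V3) : V3 := fun i => pd i f x

/-- Divergence of a vector field. -/
def div3 (X : V3 → V3) (x : V3) : ℝ := ∑ i, fderiv ℝ X x (Pi.single i 1) i

/-- Curl of a vector field. -/
def curl3 (X : V3 → V3) (x : V3) : V3 :=
  ![pd 1 (fun y => X y 2) x - pd 2 (fun y => X y 1) x,
    pd 2 (fun y => X y 0) x - pd 0 (fun y => X y 2) x,
    pd 0 (fun y => X y 1) x - pd 1 (fun y => X y 0) x]

/-- Lie bracket of vector fields: [X,Y](x) = DY(x)X(x) − DX(x)Y(x). -/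
def bracket3 (X Y : V3 → V3) (x : V3) : V3 := fderiv ℝ Y x (X x) - fderiv ℝ X x (Y x)

/-- `K` is a Killing field of the Euclidean metric on `U`: `DK(x)` is antisymmetric on `U`. -/
def IsKillingOn (K : V3 → V3) (U : Set V3) : Prop :=
  ∀ x ∈ U, ∀ v w : V3, dot3 (fderiv ℝ K x v) w + dot3 v (fderiv ℝ K x w) = 0

/-- `(u,p)` solves the incompressible Euler equations on `I × ℝ³`:
∂ₜu + (Dₓu)u = −∇ₓp and divₓ u = 0. -/
def IsEulerSolution (I : Set ℝ) (u : ℝ → V3 → V3) (p : ℝ → V3 → ℝ) : Prop :=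
  (∀ t ∈ I, ∀ x : V3, deriv (fun s => u s x) t + fderiv ℝ (u t) x (u t x)
      = -grad3 (p t) x) ∧
  (∀ t ∈ I, ∀ x : V3, div3 (u t) x = 0)

theorem dot3_eq_dotProduct (v w : V3) : dot3 v w = v ⬝ᵥ w := rfl

theorem dot3_grad3 (f : V3 → ℝ) (x v : V3) : dot3 v (grad3 f x) = fderiv ℝ f x v := by
  conv_rhs => rw [pi_eq_sum_univ' v, map_sum]
  simp [dot3, grad3, pd]

theorem fderiv_dot3_apply {E : Type*} [NormedAddCommGroup E] [NormedSpace ℝ E] {f g : E → V3}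
    {x : E} (hf : DifferentiableAt ℝ f x) (hg : DifferentiableAt ℝ g x) (v : E) :
    fderiv ℝ (fun y => dot3 (f y) (g y)) x v
      = dot3 (fderiv ℝ f x v) (g x) + dot3 (f x) (fderiv ℝ g x v) := by
  have hfg := HasFDerivAt.fun_sum (u := Finset.univ) fun i _ =>
    (hasFDerivAt_pi'.1 hf.hasFDerivAt i).mul (hasFDerivAt_pi'.1 hg.hasFDerivAt i)
  rw [HasFDerivAt.fderiv (f := fun y => dot3 (f y) (g y)) hfg]
  simp [dot3, Finset.sum_add_distrib, mul_comm, add_comm]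

theorem deriv_dot3_const {f : ℝ → V3} {t : ℝ} (hf : DifferentiableAt ℝ f t) (w : V3) :
    deriv (fun s => dot3 (f s) w) t = dot3 (deriv f t) w := by
  rw [← fderiv_apply_one_eq_deriv, fderiv_dot3_apply hf (differentiableAt_const w)]
  simp [dot3_eq_dotProduct]

theorem IsKillingOn.dot3_fderiv_self {K : V3 → V3} {U : Set V3} (hK : IsKillingOn K U) {x : V3}
    (hx : x ∈ U) (v : V3) : dot3 v (fderiv ℝ K x v) = 0 := by
  have h := hK x hx v v
  rw [dot3_eq_dotProduct, dotProduct_comm, ← dot3_eq_dotProduct] at h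
  linarith

theorem ContDiffOn.differentiableAt_slices {E F : Type*} [NormedAddCommGroup E] [NormedSpace ℝ E]
    [NormedAddCommGroup F] [NormedSpace ℝ F] {n : WithTop ℕ∞} {I : Set ℝ} {u : ℝ → E → F}
    (hu : ContDiffOn ℝ n (fun q : ℝ × E => u q.1 q.2) (I ×ˢ Set.univ)) (hI : IsOpen I)
    (hn : n ≠ 0) {t : ℝ} (ht : t ∈ I) (x : E) :
    DifferentiableAt ℝ (fun s => u s x) t ∧ DifferentiableAt ℝ (u t) x := by
  have h := (hu.differentiableOn hn).differentiableAt
    ((hI.prod isOpen_univ).mem_nhds (Set.mk_mem_prod ht (Set.mem_univ x)))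
  exact ⟨h.comp (f := fun s => (s, x)) t (differentiableAt_id.prodMk (differentiableAt_const x)),
    h.comp (f := fun y => (t, y)) x ((differentiableAt_const t).prodMk differentiableAt_id)⟩

theorem IsKillingOn.swirl_material_derivative {K : V3 → V3} {U : Set V3} (hK : IsKillingOn K U)
    {u : ℝ → V3 → V3} {t : ℝ} {x : V3} (hx : x ∈ U) (hut : DifferentiableAt ℝ (fun s => u s x) t)
    (hux : DifferentiableAt ℝ (u t) x) (hKx : DifferentiableAt ℝ K x) :
    deriv (fun s => dot3 (u s x) (K x)) t
        + dot3 (u t x) (grad3 (fun y => dot3 (u t y) (K y)) x)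
      = dot3 (deriv (fun s => u s x) t + fderiv ℝ (u t) x (u t x)) (K x) := by
  rw [deriv_dot3_const hut, dot3_grad3, fderiv_dot3_apply hux hKx, hK.dot3_fderiv_self hx,
    add_zero, dot3_eq_dotProduct, dot3_eq_dotProduct, dot3_eq_dotProduct, add_dotProduct]

theorem swirl_transport_equation_general (I : Set ℝ) (hIopen : IsOpen I)
    (K : V3 → V3) (hKsmooth : ContDiff ℝ (⊤ : ℕ∞) K)
    (hKill : IsKillingOn K Set.univ)
    (u : ℝ → V3 → V3) (p : ℝ → V3 → ℝ)
    (hu : ContDiffOn ℝ (⊤ : ℕ∞) (fun q : ℝ × V3 => u q.1 q.2) (I ×ˢ (Set.univ : Set V3)))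
    (heuler : IsEulerSolution I u p) :
    ∀ t ∈ I, ∀ x : V3,
      deriv (fun s => dot3 (u s x) (K x)) t
        + dot3 (u t x) (grad3 (fun y => dot3 (u t y) (K y)) x)
      = - dot3 (grad3 (p t) x) (K x) := by
  intro t ht x
  obtain ⟨hut, hux⟩ := hu.differentiableAt_slices hIopen (by simp) ht x
  rw [hKill.swirl_material_derivative (Set.mem_univ x) hut hux
      (hKsmooth.differentiable (by simp) x), heuler.1 t ht x, dot3_eq_dotProduct,
    dot3_eq_dotProduct, neg_dotProduct]

/-- for a Killing field K and a smooth Euler solution (u,p), the swirl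
σ(t,x) = ⟨u(t,x), K(x)⟩ satisfies ∂ₜσ + ⟨u, ∇ₓσ⟩ = −⟨∇ₓp, K⟩. -/
theorem swirl_transport_equation (I : Set ℝ) (hIopen : IsOpen I) (hI0 : (0:ℝ) ∈ I)
    (hIconn : I.OrdConnected)
    (K : V3 → V3) (hKsmooth : ContDiff ℝ (⊤ : ℕ∞) K)
    (hKill : IsKillingOn K Set.univ)
    (u : ℝ → V3 → V3) (p : ℝ → V3 → ℝ)
    (hu : ContDiffOn ℝ (⊤ : ℕ∞) (fun q : ℝ × V3 => u q.1 q.2) (I ×ˢ (Set.univ : Set V3)))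
    (hp : ContDiffOn ℝ (⊤ : ℕ∞) (fun q : ℝ × V3 => p q.1 q.2) (I ×ˢ (Set.univ : Set V3)))
    (heuler : IsEulerSolution I u p) :
    ∀ t ∈ I, ∀ x : V3,
      deriv (fun s => dot3 (u s x) (K x)) t
        + dot3 (u t x) (grad3 (fun y => dot3 (u t y) (K y)) x)
      = - dot3 (grad3 (p t) x) (K x) :=
  swirl_transport_equation_general I hIopen K hKsmooth hKill u p hu heuler
end
end

section
/- Let K be a nowhere-vanishing Killing field on an open set U ⊆ ℝ³. Then curl K = φ K − ∇⊥(|K|²) on U, where φ = ⟨curl K, K⟩/|K|² and ∇⊥h = (K × ∇h)/|K|². -/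
/-!
A Killing field has antisymmetric derivative `A = DK`, and an antisymmetric map of ℝ³ is
`v ↦ ½ c × v` with `c = curl K`. Hence `∇|K|² = 2 Aᵀ K = -2 A K = K × curl K`, and the
identity `K × (K × c) = ⟨K, c⟩ K - |K|² c` turns `∇⊥|K|² = (K × (K × curl K)) / |K|²` into
`φ K - curl K`.
-/

noncomputable section

/-- Skew gradient ∇⊥h = (K × ∇h)/|K|². -/
def skewGrad (K : V3 → V3) (h : V3 → ℝ) (x : V3) : V3 :=
  (dot3 (K x) (K x))⁻¹ • cross3 (K x) (grad3 h x)

/-- Poisson bracket {f,g} = ⟨∇⊥f, ∇g⟩. -/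
def pbracket (K : V3 → V3) (f g : V3 → ℝ) (x : V3) : ℝ :=
  dot3 (skewGrad K f x) (grad3 g x)

/-- The K-Laplacian Δ_K f = div(∇f/|K|²). -/
def lapK (K : V3 → V3) (f : V3 → ℝ) (x : V3) : ℝ :=
  div3 (fun y => (dot3 (K y) (K y))⁻¹ • grad3 f y) x

/-- φ = ⟨curl K, K⟩/|K|². -/
def phiK (K : V3 → V3) (x : V3) : ℝ := dot3 (curl3 K x) (K x) / dot3 (K x) (K x)

theorem dot3_self_ne_zero {u : V3} (hu : u ≠ 0) : dot3 u u ≠ 0 := by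
  contrapose! hu
  have hsq := (Finset.sum_eq_zero_iff_of_nonneg fun i _ => mul_self_nonneg (u i)).1 hu
  funext i
  exact mul_self_eq_zero.1 (hsq i (Finset.mem_univ i))

theorem cross3_cross3_self (u c : V3) :
    cross3 u (cross3 u c) = dot3 u c • u - dot3 u u • c := by
  funext i
  fin_cases i <;>
  · simp only [cross3, dot3, Fin.sum_univ_three, Fin.zero_eta, Fin.mk_one, Fin.reduceFinMk,
      Matrix.cons_val, Matrix.cons_val_one, Matrix.cons_val_zero, Pi.sub_apply, Pi.smul_apply,
      smul_eq_mul]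
    ring

theorem dot3_comm (u v : V3) : dot3 u v = dot3 v u := by
  simp only [dot3, mul_comm]

theorem eq_div_smul_sub_inv_smul_cross3_cross3 {k : V3} (hk : dot3 k k ≠ 0) (c : V3) :
    c = (dot3 c k / dot3 k k) • k - (dot3 k k)⁻¹ • cross3 k (cross3 k c) := by
  rw [cross3_cross3_self, smul_sub, smul_smul, smul_smul, inv_mul_cancel₀ hk, one_smul,
    dot3_comm k c, div_eq_inv_mul, sub_sub_cancel]

def curl3Lin (A : V3 →L[ℝ] V3) : V3 :=
  ![A (Pi.single 1 1) 2 - A (Pi.single 2 1) 1,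
    A (Pi.single 2 1) 0 - A (Pi.single 0 1) 2,
    A (Pi.single 0 1) 1 - A (Pi.single 1 1) 0]

section Antisymmetric

variable {A : V3 →L[ℝ] V3} (hA : ∀ v w, dot3 (A v) w + dot3 v (A w) = 0)
include hA

theorem apply_single_apply_eq_neg (i j : Fin 3) :
    A (Pi.single j 1) i = -A (Pi.single i 1) j := by
  have h := hA (Pi.single i 1) (Pi.single j 1)
  simp only [dot3, Pi.single_apply, mul_ite, ite_mul, mul_one, one_mul, mul_zero, zero_mul,
    Finset.sum_ite_eq', Finset.mem_univ, if_true] at h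
  linarith

theorem apply_single_apply_self (i : Fin 3) : A (Pi.single i 1) i = 0 := by
  linarith [apply_single_apply_eq_neg hA i i]

theorem two_mul_dot3_apply_single (u : V3) (i : Fin 3) :
    2 * dot3 u (A (Pi.single i 1)) = cross3 u (curl3Lin A) i := by
  have h := apply_single_apply_eq_neg hA
  have h0 := apply_single_apply_self hA
  fin_cases i <;>
  · simp only [dot3, cross3, curl3Lin, Fin.sum_univ_three, Fin.zero_eta, Fin.mk_one,
      Fin.reduceFinMk, Matrix.cons_val, Matrix.cons_val_one, Matrix.cons_val_zero, h 0 1, h 0 2,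
      h 1 2, h0]
    ring

end Antisymmetric

section Differentiable

variable {X : V3 → V3} {x : V3} (hX : DifferentiableAt ℝ X x)
include hX

theorem pd_apply_eq_fderiv_apply (i j : Fin 3) :
    pd i (fun y => X y j) x = fderiv ℝ X x (Pi.single i 1) j := by
  rw [pd, fderiv_apply hX]
  rfl

theorem curl3_eq_curl3Lin_fderiv : curl3 X x = curl3Lin (fderiv ℝ X x) := by
  simp only [curl3, curl3Lin, pd_apply_eq_fderiv_apply hX]

theorem grad3_dot3_self :
    grad3 (fun y => dot3 (X y) (X y)) x =
      fun i => 2 * dot3 (X x) (fderiv ℝ X x (Pi.single i 1)) := by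
  have hcomp (j : Fin 3) : HasFDerivAt (fun y => X y j)
      ((ContinuousLinearMap.proj j).comp (fderiv ℝ X x)) x :=
    hasFDerivAt_pi'.1 hX.hasFDerivAt j
  have hdot : HasFDerivAt (fun y => ∑ j, X y j * X y j)
      (∑ j, (X x j • (ContinuousLinearMap.proj j).comp (fderiv ℝ X x) +
        X x j • (ContinuousLinearMap.proj j).comp (fderiv ℝ X x))) x :=
    HasFDerivAt.fun_sum fun j _ => (hcomp j).fun_mul (hcomp j)
  funext i
  simp [grad3, pd, dot3, hdot.fderiv, Finset.mul_sum, two_mul]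

theorem grad3_dot3_self_eq_cross3_curl3
    (hskew : ∀ v w, dot3 (fderiv ℝ X x v) w + dot3 v (fderiv ℝ X x w) = 0) :
    grad3 (fun y => dot3 (X y) (X y)) x = cross3 (X x) (curl3 X x) := by
  rw [grad3_dot3_self hX, curl3_eq_curl3Lin_fderiv hX]
  funext i
  exact two_mul_dot3_apply_single hskew (X x) i

end Differentiable

/-- for a nowhere-vanishing Killing field K on an open set U ⊆ ℝ³,
curl K = φ K − ∇⊥(|K|²), where φ = ⟨curl K, K⟩/|K|² and ∇⊥h = (K × ∇h)/|K|². -/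
theorem curl_K_decomposition (U : Set V3) (hU : IsOpen U)
    (K : V3 → V3) (hKsmooth : ContDiffOn ℝ (⊤ : ℕ∞) K U)
    (hKill : IsKillingOn K U) (hKne : ∀ x ∈ U, K x ≠ 0) :
    ∀ x ∈ U,
      curl3 K x = phiK K x • K x - skewGrad K (fun y => dot3 (K y) (K y)) x := by
  intro x hx
  have hK : DifferentiableAt ℝ K x :=
    (hKsmooth.contDiffAt (hU.mem_nhds hx)).differentiableAt (by simp)
  rw [skewGrad, grad3_dot3_self_eq_cross3_curl3 hK (hKill x hx), phiK]
  exact eq_div_smul_sub_inv_smul_cross3_cross3 (dot3_self_ne_zero (hKne x hx)) _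
end
end
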